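/- For every real α > −1 and all integers i, j ≥ 0, the generalised Laguerre polynomials satisfy the orthogonality relation ∫_0^∞ q^α e^{−q} L_i^α(q) L_j^α(q) dq = i!·Γ(α+i+1) if i = j, and the integral equals 0 if i ≠ j. -/

import Mathlib

/-!
Expand `L_i^α L_j^α` into monomials: the moment `∫₀^∞ q^(α+n) e^(-q) dq` is `Γ(α+n+1)`, and
`Γ(α+k+m+1) / Γ(α+k+1)` is the rising factorial `(α+1+k)_m`, a monic polynomial of degree `m`
in `k`. The alternating binomial sum over the coefficients of `L_i^α` is therefore the `i`-th
forward difference of that polynomial, which is `0` for `m < i` and `i!` for `m = i`. For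
`j ≤ i`, `L_j^α` is monic of degree `j`, so only the term `m = j = i` survives.
-/

/-- The monic generalised Laguerre polynomial
`L_i^α(q) = ∑_{k=0}^i C(i,k)(−1)^{i−k}(Γ(i+α+1)/Γ(k+α+1)) q^k`. -/
noncomputable def laguerreL (i : ℕ) (α : ℝ) (q : ℝ) : ℝ :=
  ∑ k ∈ Finset.range (i + 1),
    (i.choose k : ℝ) * (-1 : ℝ) ^ (i - k) *
      (Real.Gamma ((i : ℝ) + α + 1) / Real.Gamma ((k : ℝ) + α + 1)) * q ^ k

open Finset MeasureTheory Real Polynomial fwdDiff Nat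

theorem Real.Gamma_add_nat_eq_ascPochhammer_mul {x : ℝ} (hx : ∀ k : ℕ, x ≠ -k) (n : ℕ) :
    Gamma (x + n) = (ascPochhammer ℝ n).eval x * Gamma x := by
  induction n with
  | zero => simp
  | succ n ih =>
    have hxn : x + n ≠ 0 := fun h => hx n (by linarith)
    rw [Nat.cast_succ, ← add_assoc, Gamma_add_one hxn, ih, ascPochhammer_succ_eval]
    ring

theorem fwdDiff_iter_eval_ascPochhammer {R : Type*} [CommRing R] [NoZeroDivisors R]
    [Nontrivial R] {m n : ℕ} (hmn : m ≤ n) (x : R) :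
    (Δ_[1])^[n] (ascPochhammer R m).eval x = if m = n then (n ! : R) else 0 := by
  rcases hmn.lt_or_eq with hlt | rfl
  · rw [Polynomial.fwdDiff_iter_eq_zero_of_degree_lt (by rwa [ascPochhammer_natDegree]),
      if_neg hlt.ne, Pi.zero_apply]
  · have := (ascPochhammer R m).fwdDiff_iter_degree_eq_factorial
    rw [ascPochhammer_natDegree, (monic_ascPochhammer R m).leadingCoeff, one_smul] at this
    simp [this]

theorem integral_rpow_mul_exp_neg_mul_sum {ι : Type*} {α : ℝ} (hα : -1 < α) (s : Finset ι)
    (a : ι → ℝ) (n : ι → ℕ) :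
    ∫ q in Set.Ioi 0, q ^ α * exp (-q) * ∑ k ∈ s, a k * q ^ n k =
      ∑ k ∈ s, a k * Gamma (α + n k + 1) := by
  have hpos (k : ι) : 0 < α + n k + 1 := by linarith [(n k).cast_nonneg (α := ℝ)]
  have hterm (k : ι) : Set.EqOn (fun q => q ^ α * exp (-q) * (a k * q ^ n k))
      (fun q => a k * (exp (-q) * q ^ (α + n k + 1 - 1))) (Set.Ioi 0) := fun q (hq : 0 < q) => by
    simp only [add_sub_cancel_right, rpow_add hq, rpow_natCast]
    ring
  simp_rw [mul_sum]
  rw [integral_finsetSum _ fun k _ =>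
    IntegrableOn.congr_fun ((GammaIntegral_convergent (hpos k)).const_mul (a k))
      (hterm k).symm measurableSet_Ioi]
  refine sum_congr rfl fun k _ => ?_
  rw [setIntegral_congr_fun measurableSet_Ioi (hterm k), integral_const_mul,
    ← Gamma_eq_integral (hpos k)]

noncomputable def laguerreCoeff (i : ℕ) (α : ℝ) (k : ℕ) : ℝ :=
  (i.choose k : ℝ) * (-1 : ℝ) ^ (i - k) *
    (Real.Gamma ((i : ℝ) + α + 1) / Real.Gamma ((k : ℝ) + α + 1))

theorem laguerreL_eq_sum (i : ℕ) (α q : ℝ) :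
    laguerreL i α q = ∑ k ∈ range (i + 1), laguerreCoeff i α k * q ^ k := rfl

theorem laguerreL_mul_laguerreL_eq_sum (i j : ℕ) (α q : ℝ) :
    laguerreL i α q * laguerreL j α q =
      ∑ km ∈ range (i + 1) ×ˢ range (j + 1),
        laguerreCoeff i α km.1 * laguerreCoeff j α km.2 * q ^ (km.1 + km.2) := by
  rw [laguerreL_eq_sum, laguerreL_eq_sum, sum_mul_sum, sum_product]
  exact sum_congr rfl fun k _ => sum_congr rfl fun m _ => by ring

theorem laguerreCoeff_self {α : ℝ} (hα : -1 < α) (i : ℕ) : laguerreCoeff i α i = 1 := by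
  have : Gamma (i + α + 1) ≠ 0 :=
    (Gamma_pos_of_pos (by linarith [i.cast_nonneg (α := ℝ)])).ne'
  simp [laguerreCoeff, this]

theorem sum_laguerreCoeff_mul_Gamma {α : ℝ} (hα : -1 < α) {i m : ℕ} (hmi : m ≤ i) :
    ∑ k ∈ range (i + 1), laguerreCoeff i α k * Gamma (α + (k + m : ℕ) + 1) =
      if m = i then i ! * Gamma (α + i + 1) else 0 := by
  calc ∑ k ∈ range (i + 1), laguerreCoeff i α k * Gamma (α + (k + m : ℕ) + 1)
      = Gamma (i + α + 1) * ∑ k ∈ range (i + 1),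
          ((-1 : ℤ) ^ (i - k) * i.choose k) • (ascPochhammer ℝ m).eval (α + 1 + k • 1) := by
        rw [mul_sum]
        refine sum_congr rfl fun k _ => ?_
        have hΓ : Gamma (α + 1 + k) ≠ 0 :=
          (Gamma_pos_of_pos (by linarith [k.cast_nonneg (α := ℝ)])).ne'
        rw [show α + (k + m : ℕ) + 1 = α + 1 + k + m by push_cast; ring,
          Gamma_add_nat_eq_ascPochhammer_mul (fun n h => by linarith [n.cast_nonneg (α := ℝ)]),
          nsmul_one, zsmul_eq_mul, laguerreCoeff, show (k : ℝ) + α + 1 = α + 1 + k by ring]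
        field_simp
        push_cast
        ring
    _ = Gamma (i + α + 1) * (Δ_[1])^[i] (ascPochhammer ℝ m).eval (α + 1) := by
        rw [fwdDiff_iter_eq_sum_shift]
    _ = if m = i then i ! * Gamma (α + i + 1) else 0 := by
        rw [fwdDiff_iter_eval_ascPochhammer hmi]
        split_ifs <;> simp [add_comm, mul_comm]

/-- Orthogonality of the monic generalised Laguerre polynomials: for real `α > −1` and
integers `i, j ≥ 0`,
`∫₀^∞ q^α e^{−q} L_i^α(q) L_j^α(q) dq = i!·Γ(α+i+1)` if `i = j`, and `0` otherwise. -/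
theorem laguerre_orthogonality (α : ℝ) (hα : -1 < α) (i j : ℕ) :
    (∫ q in Set.Ioi (0 : ℝ), q ^ α * Real.exp (-q) * laguerreL i α q * laguerreL j α q) =
      if i = j then (i.factorial : ℝ) * Real.Gamma (α + (i : ℝ) + 1) else 0 := by
  wlog hji : j ≤ i generalizing i j
  · have := this j i (by omega)
    simp only [mul_assoc, mul_comm (laguerreL j α _)] at this ⊢
    rw [this, if_neg (by omega), if_neg (by omega)]
  simp_rw [mul_assoc _ (laguerreL i α _), laguerreL_mul_laguerreL_eq_sum]
  rw [integral_rpow_mul_exp_neg_mul_sum hα, sum_product_right]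
  dsimp only
  calc ∑ m ∈ range (j + 1), ∑ k ∈ range (i + 1),
        laguerreCoeff i α k * laguerreCoeff j α m * Gamma (α + (k + m : ℕ) + 1)
      = ∑ m ∈ range (j + 1),
          laguerreCoeff j α m * if m = i then i ! * Gamma (α + i + 1) else 0 :=
        sum_congr rfl fun m hm => by
          rw [← sum_laguerreCoeff_mul_Gamma hα (by grind), mul_sum]
          exact sum_congr rfl fun k _ => by ring
    _ = if i = j then i ! * Gamma (α + i + 1) else 0 := by
          simp_rw [mul_ite, mul_zero]
          rw [sum_ite_eq']
          rcases hji.eq_or_lt with rfl | hlt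
          · simp [laguerreCoeff_self hα]
          · simp [hlt.ne', hlt.not_ge]
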